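/- arXiv:2510.08297 — 5 statements merged into one kernel-verified Lean document; each statement's English description precedes it below -/
import Mathlib

section
/- Let T be a tree with n vertices and maximum degree 3, and let z be a positive integer with n ≥ 3z − 2. Then there exists a set of edges E' ⊆ E(T) such that every connected component of T \ E' contains at least z and at most 3z − 2 vertices. -/
open SimpleGraph Finset
open scoped Classical

/-!
Cut off pieces one at a time. For an edge `xy` of a subtree `S`, call the part of `S` hanging
off `y` away from `x` a branch. Among the branches with at least `z` vertices take a smallest
one: it consists of `y` and at most two branches at `y` (maximum degree `3`), each smaller and
hence of size `< z`, so it has between `z` and `2z - 1` vertices. Removing it leaves a subtree;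
if `|S| ≥ 3z - 1` the rest still has `≥ z` vertices, and we recurse. Deleting the edges between
different pieces gives the required forest.
-/

namespace SimpleGraph

variable {V : Type*} {G : SimpleGraph V} {s t : Finset V} {u x y : V}

def PreconnectedOn (G : SimpleGraph V) (s : Finset V) : Prop :=
  ∀ ⦃x⦄, x ∈ s → ∀ ⦃y⦄, y ∈ s → ∃ p : G.Walk x y, ∀ v ∈ p.support, v ∈ s

noncomputable def componentIn (G : SimpleGraph V) (s : Finset V) (u : V) : Finset V :=
  s.filter fun x => ∃ p : G.Walk u x, ∀ v ∈ p.support, v ∈ s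

theorem PreconnectedOn.of_walks_to {r : V}
    (h : ∀ x ∈ s, ∃ p : G.Walk x r, ∀ v ∈ p.support, v ∈ s) : G.PreconnectedOn s := by
  intro x hx y hy
  obtain ⟨p, hp⟩ := h x hx
  obtain ⟨q, hq⟩ := h y hy
  refine ⟨p.append q.reverse, fun v hv => ?_⟩
  rw [Walk.mem_support_append_iff, Walk.support_reverse, List.mem_reverse] at hv
  exact hv.elim (hp v) (hq v)

theorem Preconnected.preconnectedOn_univ [Fintype V] (h : G.Preconnected) :
    G.PreconnectedOn univ := fun x _ y _ => ⟨(h x y).some, fun _ _ => mem_univ _⟩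

theorem PreconnectedOn.exists_adj (hs : G.PreconnectedOn s) (h : 1 < #s) :
    ∃ x ∈ s, ∃ y ∈ s, G.Adj x y := by
  obtain ⟨a, ha, b, hb, hab⟩ := one_lt_card.1 h
  obtain ⟨p, hp⟩ := hs ha hb
  cases p with
  | nil => exact absurd rfl hab
  | cons h p => exact ⟨a, ha, _, hp _ (by simp), h⟩

theorem mem_componentIn :
    x ∈ G.componentIn s u ↔ x ∈ s ∧ ∃ p : G.Walk u x, ∀ v ∈ p.support, v ∈ s :=
  mem_filter

theorem componentIn_subset : G.componentIn s u ⊆ s := filter_subset _ _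

theorem mem_componentIn_self (hu : u ∈ s) : u ∈ G.componentIn s u :=
  mem_componentIn.2 ⟨hu, .nil, by simpa⟩

theorem support_subset_componentIn (p : G.Walk u x) (hp : ∀ v ∈ p.support, v ∈ s) :
    ∀ v ∈ p.support, v ∈ G.componentIn s u := fun v hv =>
  mem_componentIn.2 ⟨hp v hv, p.takeUntil v hv,
    fun w hw => hp w (Walk.support_takeUntil_subset_support _ _ hw)⟩

theorem preconnectedOn_componentIn : G.PreconnectedOn (G.componentIn s u) :=
  PreconnectedOn.of_walks_to (r := u) fun _ hx => by
    obtain ⟨-, p, hp⟩ := mem_componentIn.1 hx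
    exact ⟨p.reverse, by simpa using support_subset_componentIn p hp⟩

theorem mem_componentIn_of_adj (hx : x ∈ G.componentIn s u) (hy : y ∈ s) (hxy : G.Adj x y) :
    y ∈ G.componentIn s u := by
  obtain ⟨-, p, hp⟩ := mem_componentIn.1 hx
  refine mem_componentIn.2 ⟨hy, p.concat hxy, fun v hv => ?_⟩
  rw [Walk.support_concat, List.mem_append, List.mem_singleton] at hv
  exact hv.elim (hp v) (· ▸ hy)

theorem componentIn_mono (h : s ⊆ t) : G.componentIn s u ⊆ G.componentIn t u := fun x hx => by
  obtain ⟨hxs, p, hp⟩ := mem_componentIn.1 hx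
  exact mem_componentIn.2 ⟨h hxs, p, fun v hv => h (hp v hv)⟩

/- For an edge `xy` inside `s`, `G.componentIn (s.erase x) y` is the branch of `s` at `y` pointing
away from `x`. -/
theorem exists_walk_avoiding_componentIn_erase :
    ∀ {v : V} (p : G.Walk v x), (∀ w ∈ p.support, w ∈ s) →
      v ∉ G.componentIn (s.erase x) y →
      ∃ q : G.Walk v x, ∀ w ∈ q.support, w ∈ s \ G.componentIn (s.erase x) y := by
  intro v p
  induction p with
  | nil =>
    intro hp hv
    exact ⟨.nil, by simpa [hp _ (List.mem_singleton_self _)] using hv⟩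
  | @cons v w x hvw p ih =>
    intro hp hv
    have hvs : v ∈ s := hp v (by simp)
    by_cases hvx : v = x
    · subst hvx
      exact ⟨.nil, by simpa [hvs] using hv⟩
    have hw : w ∉ G.componentIn (s.erase x) y := fun hw =>
      hv (mem_componentIn_of_adj hw (mem_erase.2 ⟨hvx, hvs⟩) hvw.symm)
    obtain ⟨q, hq⟩ := ih (fun u hu => hp u (by simp [hu])) hw
    refine ⟨.cons hvw q, fun u hu => ?_⟩
    rw [Walk.support_cons, List.mem_cons] at hu
    rcases hu with rfl | hu
    exacts [mem_sdiff.2 ⟨hvs, hv⟩, hq u hu]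

theorem PreconnectedOn.sdiff_componentIn_erase (hs : G.PreconnectedOn s) (hx : x ∈ s) :
    G.PreconnectedOn (s \ G.componentIn (s.erase x) y) :=
  PreconnectedOn.of_walks_to (r := x) fun v hv => by
    obtain ⟨hvs, hvC⟩ := mem_sdiff.1 hv
    obtain ⟨p, hp⟩ := hs hvs hx
    exact exists_walk_avoiding_componentIn_erase p hp hvC

theorem PreconnectedOn.sdiff_componentIn_erase_subset (hs : G.PreconnectedOn s) (hx : x ∈ s)
    (hy : y ∈ s) (hxy : x ≠ y) :
    s \ G.componentIn (s.erase x) y ⊆ G.componentIn (s.erase y) x := by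
  intro v hv
  obtain ⟨hvs, hvC⟩ := mem_sdiff.1 hv
  obtain ⟨p, hp⟩ := hs hvs hx
  obtain ⟨q, hq⟩ := exists_walk_avoiding_componentIn_erase p hp hvC
  have hyC : y ∈ G.componentIn (s.erase x) y := mem_componentIn_self (mem_erase.2 ⟨hxy.symm, hy⟩)
  refine mem_componentIn.2 ⟨mem_erase.2 ⟨?_, hvs⟩, q.reverse, fun w hw => ?_⟩
  · rintro rfl
    exact hvC hyC
  · obtain ⟨hws, hwC⟩ := mem_sdiff.1 (hq w (by simpa using hw))
    exact mem_erase.2 ⟨fun h => hwC (h ▸ hyC), hws⟩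

theorem exists_adj_mem_componentIn_erase {r : V} :
    ∀ {x : V} (p : G.Walk x r), (∀ v ∈ p.support, v ∈ s) → x ≠ r →
      ∃ u, G.Adj r u ∧ u ∈ s ∧ x ∈ G.componentIn (s.erase r) u := by
  intro x p
  induction p with
  | nil => intro _ hxr; exact absurd rfl hxr
  | @cons x w r hxw p ih =>
    intro hp hxr
    have hxs : x ∈ s := hp x (by simp)
    by_cases hwr : w = r
    · subst hwr
      exact ⟨x, hxw.symm, hxs, mem_componentIn_self (mem_erase.2 ⟨hxr, hxs⟩)⟩
    obtain ⟨u, hru, hus, hw⟩ := ih (fun v hv => hp v (by simp [hv])) hwr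
    exact ⟨u, hru, hus, mem_componentIn_of_adj hw (mem_erase.2 ⟨hxr, hxs⟩) hxw.symm⟩

theorem componentIn_erase_subset_insert_biUnion :
    G.componentIn (s.erase x) y ⊆
      insert y (((s.filter (G.Adj y)).erase x).biUnion fun w => G.componentIn (s.erase y) w) := by
  intro v hv
  rcases eq_or_ne v y with rfl | hvy
  · exact mem_insert_self _ _
  obtain ⟨-, p, hp⟩ := mem_componentIn.1 hv
  obtain ⟨w, hyw, hw, hvw⟩ :=
    exists_adj_mem_componentIn_erase p.reverse (fun u hu => hp u (by simpa using hu)) hvy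
  obtain ⟨hwx, hws⟩ := mem_erase.1 hw
  refine mem_insert_of_mem (mem_biUnion.2 ⟨w, ?_, ?_⟩)
  · exact mem_erase.2 ⟨hwx, mem_filter.2 ⟨hws, hyw⟩⟩
  · exact componentIn_mono (erase_subset_erase y (erase_subset x s)) hvw

theorem IsAcyclic.eq_of_adj_of_preconnectedOn (hG : G.IsAcyclic) (hs : G.PreconnectedOn s)
    {r c c' : V} (hr : r ∉ s) (hc : c ∈ s) (hc' : c' ∈ s) (h : G.Adj r c) (h' : G.Adj r c') :
    c = c' := by
  obtain ⟨p, hp⟩ := hs hc hc'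
  have hrp : r ∉ p.toPath.val.support := fun hr' =>
    hr (hp r (p.support_toPath_subset_support hr'))
  have := congrArg (fun q : G.Path r c' => q.val.length)
    ((hG.subsingleton_path r c').elim ⟨.cons h p.toPath.val, p.toPath.prop.cons hrp⟩
      (Path.singleton h'))
  simp only [Walk.length_cons, Path.singleton_coe, Walk.length_nil, Nat.add_eq_right] at this
  exact Walk.eq_of_length_eq_zero this

theorem IsAcyclic.componentIn_erase_ssubset (hG : G.IsAcyclic) {w : V} (hy : y ∈ s)
    (hxy : G.Adj x y) (hyw : G.Adj y w) (hwx : w ≠ x) :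
    G.componentIn (s.erase y) w ⊂ G.componentIn (s.erase x) y := by
  set L := G.componentIn (s.erase y) w
  have hyL : y ∉ L := fun h => (mem_erase.1 (componentIn_subset h)).1 rfl
  have hxL : x ∉ L := fun h => by
    obtain ⟨-, q, hq⟩ := mem_componentIn.1 h
    exact hwx (hG.eq_of_adj_of_preconnectedOn preconnectedOn_componentIn hyL
      (mem_componentIn_self (hq w q.start_mem_support)) h hyw hxy.symm)
  have hys : y ∈ s.erase x := mem_erase.2 ⟨hxy.ne', hy⟩
  refine (ssubset_iff_of_subset fun v hv => ?_).2 ⟨y, mem_componentIn_self hys, hyL⟩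
  obtain ⟨-, p, hp⟩ := mem_componentIn.1 hv
  refine mem_componentIn.2 ⟨?_, .cons hyw p, fun u hu => ?_⟩
  · exact mem_erase.2 ⟨fun h => hxL (h ▸ hv), (mem_erase.1 (componentIn_subset hv)).2⟩
  · rw [Walk.support_cons, List.mem_cons] at hu
    rcases hu with rfl | hu
    · exact hys
    · have huL := support_subset_componentIn p hp u hu
      exact mem_erase.2 ⟨fun h => hxL (h ▸ huL), (mem_erase.1 (hp u hu)).2⟩

section MaxDegreeThree

variable [Fintype V] {z : ℕ}

theorem card_filter_adj_erase_le_two (hdeg : ∀ v, G.degree v ≤ 3) (hx : x ∈ s)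
    (hxy : G.Adj x y) : #((s.filter (G.Adj y)).erase x) ≤ 2 := by
  have hsub : s.filter (G.Adj y) ⊆ G.neighborFinset y := fun v hv =>
    (mem_neighborFinset G y v).2 (mem_filter.1 hv).2
  have := ((card_le_card hsub).trans_eq (G.card_neighborFinset_eq_degree y)).trans (hdeg y)
  rw [card_erase_of_mem (mem_filter.2 ⟨hx, hxy.symm⟩)]
  omega

theorem IsAcyclic.exists_card_componentIn_erase_lt (hG : G.IsAcyclic)
    (hdeg : ∀ v, G.degree v ≤ 3) (hz : 0 < z) (hx : x ∈ s) (hy : y ∈ s) (hxy : G.Adj x y)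
    (hzC : z ≤ #(G.componentIn (s.erase x) y)) :
    ∃ x ∈ s, ∃ y ∈ s, G.Adj x y ∧ z ≤ #(G.componentIn (s.erase x) y) ∧
      #(G.componentIn (s.erase x) y) < 2 * z := by
  obtain ⟨⟨x, y⟩, hmem, hmin⟩ := exists_min_image
    ((s ×ˢ s).filter fun e => G.Adj e.1 e.2 ∧ z ≤ #(G.componentIn (s.erase e.1) e.2))
    (fun e => #(G.componentIn (s.erase e.1) e.2))
    ⟨(x, y), mem_filter.2 ⟨mem_product.2 ⟨hx, hy⟩, hxy, hzC⟩⟩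
  obtain ⟨hxy_s, hxy, hzC⟩ := mem_filter.1 hmem
  obtain ⟨hx, hy⟩ := mem_product.1 hxy_s
  refine ⟨x, hx, y, hy, hxy, hzC, ?_⟩
  set W := (s.filter (G.Adj y)).erase x
  have hsmall : ∀ w ∈ W, #(G.componentIn (s.erase y) w) ≤ z - 1 := fun w hw => by
    obtain ⟨hwx, hws, hyw⟩ := by simpa [W] using hw
    have hlt := card_lt_card (hG.componentIn_erase_ssubset hy hxy hyw hwx)
    by_contra! hbig
    refine hlt.not_ge (hmin (y, w) (mem_filter.2 ⟨mem_product.2 ⟨hy, hws⟩, hyw, ?_⟩))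
    show z ≤ #(G.componentIn (s.erase y) w)
    omega
  calc #(G.componentIn (s.erase x) y)
      ≤ #(W.biUnion fun w => G.componentIn (s.erase y) w) + 1 :=
        (card_le_card componentIn_erase_subset_insert_biUnion).trans (card_insert_le _ _)
    _ ≤ W.sum (fun w => #(G.componentIn (s.erase y) w)) + 1 := by gcongr; exact card_biUnion_le
    _ ≤ #W * (z - 1) + 1 := by gcongr; exact sum_le_card_nsmul _ _ _ hsmall
    _ ≤ 2 * (z - 1) + 1 := by gcongr; exact card_filter_adj_erase_le_two hdeg hx hxy
    _ < 2 * z := by omega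

theorem IsAcyclic.exists_cluster (hG : G.IsAcyclic) (hdeg : ∀ v, G.degree v ≤ 3) (hz : 0 < z)
    (hs : G.PreconnectedOn s) (hcard : 2 * z ≤ #s) :
    ∃ A ⊆ s, G.PreconnectedOn A ∧ G.PreconnectedOn (s \ A) ∧ z ≤ #A ∧ #A < 2 * z := by
  obtain ⟨x₀, hx₀, y₀, hy₀, hxy₀⟩ := hs.exists_adj (by omega)
  have hcover : #s ≤ #(G.componentIn (s.erase x₀) y₀) + #(G.componentIn (s.erase y₀) x₀) :=
    calc #s ≤ #(G.componentIn (s.erase x₀) y₀ ∪ G.componentIn (s.erase y₀) x₀) :=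
          card_le_card fun v hv => by
            by_cases hvC : v ∈ G.componentIn (s.erase x₀) y₀
            · exact mem_union_left _ hvC
            · exact mem_union_right _ (hs.sdiff_componentIn_erase_subset hx₀ hy₀ hxy₀.ne
                (mem_sdiff.2 ⟨hv, hvC⟩))
      _ ≤ _ := card_union_le _ _
  obtain ⟨x, hx, y, hy, hxy, hzC, hC⟩ : ∃ x ∈ s, ∃ y ∈ s, G.Adj x y ∧
      z ≤ #(G.componentIn (s.erase x) y) ∧ #(G.componentIn (s.erase x) y) < 2 * z := by
    by_cases hz₀ : z ≤ #(G.componentIn (s.erase x₀) y₀)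
    · exact hG.exists_card_componentIn_erase_lt hdeg hz hx₀ hy₀ hxy₀ hz₀
    · exact hG.exists_card_componentIn_erase_lt hdeg hz hy₀ hx₀ hxy₀.symm (by omega)
  exact ⟨_, componentIn_subset.trans (erase_subset x s), preconnectedOn_componentIn,
    hs.sdiff_componentIn_erase hx, hzC, hC⟩

theorem IsAcyclic.exists_finpartition_preconnectedOn (hG : G.IsAcyclic)
    (hdeg : ∀ v, G.degree v ≤ 3) (hz : 0 < z) (s : Finset V) (hs : G.PreconnectedOn s)
    (hzs : z ≤ #s) :
    ∃ P : Finpartition s, ∀ A ∈ P.parts, G.PreconnectedOn A ∧ z ≤ #A ∧ #A ≤ 3 * z - 2 := by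
  induction s using Finset.strongInduction with
  | H s ih =>
  by_cases hsmall : #s ≤ 3 * z - 2
  · refine ⟨Finpartition.indiscrete (nonempty_iff_ne_empty.1 (card_pos.1 (by omega))), ?_⟩
    simp only [Finpartition.indiscrete_parts, mem_singleton, forall_eq]
    exact ⟨hs, hzs, hsmall⟩
  obtain ⟨A, hAs, hA, hsA, hzA, hA2⟩ := hG.exists_cluster hdeg hz hs (by omega)
  have hcard : #(s \ A) = #s - #A := card_sdiff_of_subset hAs
  obtain ⟨P, hP⟩ := ih (s \ A) (sdiff_ssubset hAs (card_pos.1 (by omega))) hsA (by omega)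
  refine ⟨P.extend (nonempty_iff_ne_empty.1 (card_pos.1 (by omega))) sdiff_disjoint
    (sdiff_union_of_subset hAs), ?_⟩
  simp only [Finpartition.extend_parts, mem_insert, forall_eq_or_imp]
  exact ⟨⟨hA, hzA, by omega⟩, hP⟩

end MaxDegreeThree

theorem exists_deleteEdges_connectedComponent_supp [Fintype V]
    (P : Finpartition (univ : Finset V)) (hP : ∀ A ∈ P.parts, G.PreconnectedOn A) :
    ∃ E' ⊆ G.edgeSet, ∀ c : (G.deleteEdges E').ConnectedComponent,
      ∃ A ∈ P.parts, c.supp = A := by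
  set E' := {e ∈ G.edgeSet | ¬ (e.map P.part).IsDiag}
  have hadj : ∀ a b, (G.deleteEdges E').Adj a b ↔ G.Adj a b ∧ P.part a = P.part b := by
    intro a b
    simp only [deleteEdges_adj, E', Set.mem_ofPred_eq, mem_edgeSet, Sym2.map_mk,
      Sym2.mk_isDiag_iff]
    tauto
  have hreach : ∀ a b, (G.deleteEdges E').Reachable a b ↔ P.part a = P.part b := by
    intro a b
    constructor
    · rintro ⟨p⟩
      induction p with
      | nil => rfl
      | cons h _ ih => exact ((hadj _ _).1 h).2.trans ih
    · intro hab
      have hb : b ∈ P.part a := hab ▸ P.mem_part (mem_univ b)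
      obtain ⟨p, hp⟩ := hP _ (P.part_mem.2 (mem_univ a)) (P.mem_part (mem_univ a)) hb
      refine ⟨p.toDeleteEdges E' fun e he => ?_⟩
      revert he
      refine Sym2.ind (fun u w he hE' => hE'.2 ?_) e
      rw [Sym2.map_mk, Sym2.mk_isDiag_iff,
        P.part_eq_of_mem (P.part_mem.2 (mem_univ a)) (hp u (p.fst_mem_support_of_mem_edges he)),
        P.part_eq_of_mem (P.part_mem.2 (mem_univ a)) (hp w (p.snd_mem_support_of_mem_edges he))]
  refine ⟨E', fun e he => he.1, fun c => ?_⟩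
  induction c using ConnectedComponent.ind with | h v => ?_
  refine ⟨P.part v, P.part_mem.2 (mem_univ v), ?_⟩
  ext w
  rw [ConnectedComponent.mem_supp_iff, ConnectedComponent.eq, hreach, mem_coe,
    P.mem_part_iff_part_eq_part (mem_univ w) (mem_univ v)]

end SimpleGraph

/-- Frederickson's clustering lemma: a tree on `n` vertices with maximum degree `3`
and `n ≥ 3z - 2` can be split, by removing a set of edges `E'`, into components each
containing at least `z` and at most `3z - 2` vertices. -/
theorem stmt2 {V : Type*} [Fintype V] (T : SimpleGraph V) (hT : T.IsTree)
    (hdeg : ∀ v : V, T.degree v ≤ 3) (z : ℕ) (hz : 0 < z)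
    (hn : 3 * z - 2 ≤ Fintype.card V) :
    ∃ E' ⊆ T.edgeSet, ∀ c : (T.deleteEdges E').ConnectedComponent,
      z ≤ c.supp.ncard ∧ c.supp.ncard ≤ 3 * z - 2 := by
  obtain ⟨P, hP⟩ := hT.isAcyclic.exists_finpartition_preconnectedOn hdeg hz univ
    hT.connected.preconnected.preconnectedOn_univ (by rw [card_univ]; omega)
  obtain ⟨E', hE', hcomp⟩ :=
    exists_deleteEdges_connectedComponent_supp P fun A hA => (hP A hA).1
  refine ⟨E', hE', fun c => ?_⟩
  obtain ⟨A, hA, hc⟩ := hcomp c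
  rw [hc, Set.ncard_coe_finset]
  exact (hP A hA).2
end

section
/- Let G be a graph, H ⊆ G a subgraph with an embedding Π of G into H with congestion at most α (every edge of H lies on at most α of the paths Π(e)). Suppose an edge f of H is deleted, and let H' be H \ {f} together with all edges e of G \ {f} whose embedding path Π(e) contains f. Then H' ⊆ G \ {f}, H' has at most |E(H)| − 1 + α edges more precisely |E(H')| ≤ |E(H)| + α − 1, and H' is a connectivity sparsifier of G \ {f}: two vertices are connected in H' if and only if they are connected in G \ {f}. -/
open SimpleGraph

/-- `usesEdge emb e f` says that the embedding path of the `G`-edge `e` contains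
the edge `f`. -/
def usesEdge {V : Type*} {G H : SimpleGraph V}
    (emb : ∀ u v : V, G.Adj u v → H.Walk u v) (e f : Sym2 V) : Prop :=
  ∃ (u v : V) (h : G.Adj u v), e = s(u, v) ∧ f ∈ (emb u v h).edges

/-- Deleting an edge `f` of `H` and adding all edges of `G \ {f}` whose embedding path
uses `f` yields a graph `H' ⊆ G \ {f}` with at most `|E(H)| - 1 + α` edges that is a
connectivity sparsifier of `G \ {f}`, provided the embedding has congestion at most `α`. -/
theorem stmt10 {V : Type*} [Fintype V] (G H : SimpleGraph V) (hHG : H ≤ G)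
    (emb : ∀ u v : V, G.Adj u v → H.Walk u v) (α : ℕ)
    (hcong : ∀ f ∈ H.edgeSet,
      {e | e ∈ G.edgeSet ∧ usesEdge emb e f}.ncard ≤ α)
    (f : Sym2 V) (hf : f ∈ H.edgeSet)
    (H' : SimpleGraph V)
    (hH' : H' = H.deleteEdges {f} ⊔
      SimpleGraph.fromEdgeSet {e | e ∈ G.edgeSet ∧ e ≠ f ∧ usesEdge emb e f}) :
    H' ≤ G.deleteEdges {f} ∧
    H'.edgeSet.ncard + 1 ≤ H.edgeSet.ncard + α ∧
    (∀ u v : V, H'.Reachable u v ↔ (G.deleteEdges {f}).Reachable u v) := by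
  classical
  subst hH'
  have hle : H.deleteEdges {f} ⊔
      SimpleGraph.fromEdgeSet {e | e ∈ G.edgeSet ∧ e ≠ f ∧ usesEdge emb e f}
      ≤ G.deleteEdges {f} := by
    apply sup_le
    · intro u v huv
      rw [deleteEdges_adj] at huv ⊢
      exact ⟨hHG huv.1, huv.2⟩
    · intro u v huv
      rw [fromEdgeSet_adj] at huv
      obtain ⟨⟨hG, hne, _⟩, hne'⟩ := huv
      rw [deleteEdges_adj]
      exact ⟨hG, by simpa using hne⟩
  refine ⟨hle, ?_, ?_⟩
  · have hES : (H.deleteEdges {f} ⊔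
        SimpleGraph.fromEdgeSet {e | e ∈ G.edgeSet ∧ e ≠ f ∧ usesEdge emb e f}).edgeSet =
        (H.edgeSet \ {f}) ∪
          ({e | e ∈ G.edgeSet ∧ e ≠ f ∧ usesEdge emb e f} \ {e : Sym2 V | e.IsDiag}) := by
      rw [edgeSet_sup, edgeSet_deleteEdges, edgeSet_fromEdgeSet]; rfl
    have h1 : (H.edgeSet \ {f}).ncard + 1 = H.edgeSet.ncard :=
      Set.ncard_diff_singleton_add_one hf (Set.toFinite _)
    have h2 : ({e | e ∈ G.edgeSet ∧ e ≠ f ∧ usesEdge emb e f} \ {e : Sym2 V | e.IsDiag}).ncard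
        ≤ α := by
      refine le_trans (Set.ncard_le_ncard ?_ (Set.toFinite _)) (hcong f hf)
      intro e he
      exact ⟨he.1.1, he.1.2.2⟩
    have h3 : (H.deleteEdges {f} ⊔
        SimpleGraph.fromEdgeSet {e | e ∈ G.edgeSet ∧ e ≠ f ∧ usesEdge emb e f}).edgeSet.ncard ≤ (H.edgeSet \ {f}).ncard +
        ({e | e ∈ G.edgeSet ∧ e ≠ f ∧ usesEdge emb e f} \ {e : Sym2 V | e.IsDiag}).ncard := by
      rw [hES]; exact Set.ncard_union_le _ _
    omega
  · intro u v
    constructor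
    · exact fun h => h.mono hle
    · intro h
      obtain ⟨w⟩ := h
      induction w with
      | nil => exact Reachable.refl _
      | cons ha p ih =>
        refine Reachable.trans ?_ ih
        rename_i x y z
        rw [deleteEdges_adj] at ha
        obtain ⟨hG, hne⟩ := ha
        simp only [Set.mem_singleton_iff] at hne
        by_cases hc : f ∈ (emb x y hG).edges
        · refine Reachable.mono le_sup_right (Adj.reachable ?_)
          rw [fromEdgeSet_adj]
          exact ⟨⟨G.mem_edgeSet.mpr hG, hne, x, y, hG, rfl, hc⟩, hG.ne⟩
        · have : (H.deleteEdges {f}).Reachable x y := by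
            refine ⟨((emb x y hG).toDeleteEdges {f} ?_)⟩
            intro e he
            simp only [Set.mem_singleton_iff]
            rintro rfl
            exact hc he
          exact this.mono le_sup_left
end

section
/- Let G be a graph and F a spanning forest of G such that F is maximal except for one missing link: there exist vertices u, v connected in G but in different tree components C_u ∋ u and C_v ∋ v of F, and every pair of vertices connected in G is connected in F unless one lies in C_u and the other in C_v. Let F' be a maximal spanning forest of G. Then on the unique path in F' from u to v there exists an edge (x, y) with x in the component C_u of F and y in the component C_v of F, and F + (x, y) is a maximal spanning forest of G. -/
open SimpleGraph

/-- `F` is a maximal spanning forest of `G`. -/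
def IsMSF {V : Type*} (G F : SimpleGraph V) : Prop :=
  F ≤ G ∧ F.IsAcyclic ∧ ∀ u v : V, G.Reachable u v ↔ F.Reachable u v

private lemma find_edge {V : Type*} {G F F' : SimpleGraph V} (hF'G : F' ≤ G)
    {u v : V} (hnuv : ¬ F.Reachable u v)
    (hexc : ∀ x y : V, G.Reachable x y →
      (F.Reachable x y ∨ (F.Reachable x u ∧ F.Reachable y v) ∨
        (F.Reachable x v ∧ F.Reachable y u))) :
    ∀ {a b : V} (p : F'.Walk a b), F.Reachable a u → F.Reachable b v →
      ∃ x y : V, s(x, y) ∈ p.edges ∧ F.Reachable x u ∧ F.Reachable y v := by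
  intro a b p
  induction p with
  | nil => exact fun h1 h2 => absurd (h1.symm.trans h2) hnuv
  | cons h q ih =>
    intro h1 h2
    rename_i c d _
    have hG : G.Reachable c d := (hF'G h).reachable
    rcases hexc c d hG with hcd | ⟨hcu, hdv⟩ | ⟨hcv, hdu⟩
    · obtain ⟨x, y, hxy, hxu, hyv⟩ := ih (hcd.symm.trans h1) h2
      exact ⟨x, y, by simp [hxy], hxu, hyv⟩
    · exact ⟨c, d, by simp, hcu, hdv⟩
    · exact absurd (h1.symm.trans hcv) hnuv

/-- Suppose the spanning forest `F ⊆ G` is maximal except for one missing link between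
the components `C_u ∋ u` and `C_v ∋ v` (with `u, v` connected in `G` but not in `F`, and
any `G`-connected pair is `F`-connected unless one vertex lies in `C_u` and the other in
`C_v`). Then along the unique path from `u` to `v` in any maximal spanning forest `F'`
of `G` there is an edge `(x, y)` with `x ∈ C_u` and `y ∈ C_v`, and adding it to `F`
yields a maximal spanning forest of `G`. -/
theorem stmt13 {V : Type*} (G F : SimpleGraph V) (hFG : F ≤ G) (hFacyclic : F.IsAcyclic)
    (u v : V) (huv : G.Reachable u v) (hnuv : ¬ F.Reachable u v)
    (hexc : ∀ x y : V, G.Reachable x y →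
      (F.Reachable x y ∨ (F.Reachable x u ∧ F.Reachable y v) ∨
        (F.Reachable x v ∧ F.Reachable y u)))
    (F' : SimpleGraph V) (hF' : IsMSF G F')
    (p : F'.Walk u v) (hp : p.IsPath) :
    ∃ x y : V, s(x, y) ∈ p.edges ∧ F.Reachable x u ∧ F.Reachable y v ∧
      IsMSF G (F ⊔ fromEdgeSet {s(x, y)}) := by
  obtain ⟨x, y, hxy, hxu, hyv⟩ :=
    find_edge hF'.1 hnuv hexc p (Reachable.refl u) (Reachable.refl v)
  refine ⟨x, y, hxy, hxu, hyv, ?_, ?_, ?_⟩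
  · -- F₂ ≤ G
    have hxyG : G.Adj x y := hF'.1 (p.adj_of_mem_edges hxy)
    refine sup_le hFG ?_
    calc fromEdgeSet {s(x, y)} ≤ fromEdgeSet G.edgeSet :=
          fromEdgeSet_mono (by simp [hxyG])
      _ = G := fromEdgeSet_edgeSet G
  · -- acyclic
    have hxyG : G.Adj x y := hF'.1 (p.adj_of_mem_edges hxy)
    have hnxy : ¬ F.Reachable x y := fun h => hnuv (hxu.symm.trans (h.trans hyv))
    intro a c hc
    by_cases he : s(x, y) ∈ c.edges
    · have hreach := (adj_and_reachable_delete_edges_iff_exists_cycle.mpr ⟨a, c, hc, he⟩).2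
      refine hnxy (hreach.mono ?_)
      rw [deleteEdges, sup_sdiff_right_self]
      exact sdiff_le
    · have hedges : ∀ e ∈ c.edges, e ∈ F.edgeSet := by
        intro e hec
        have := c.edges_subset_edgeSet hec
        rw [edgeSet_sup] at this
        rcases this with h1 | h1
        · exact h1
        · simp only [edgeSet_fromEdgeSet, Set.mem_diff, Set.mem_singleton_iff] at h1
          exact absurd (h1.1 ▸ hec) he
      exact hFacyclic (c.transfer F hedges) (hc.transfer hedges)
  · -- reachability
    intro a b
    have hle : F ≤ F ⊔ fromEdgeSet {s(x, y)} := le_sup_left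
    have hxyadj : (F ⊔ fromEdgeSet {s(x, y)}).Adj x y := by
      have hxyG : G.Adj x y := hF'.1 (p.adj_of_mem_edges hxy)
      exact Or.inr (by simp [hxyG.ne])
    constructor
    · intro hG
      rcases hexc a b hG with hab | ⟨hau, hbv⟩ | ⟨hav, hbu⟩
      · exact hab.mono hle
      · exact ((hau.trans hxu.symm).mono hle).trans
          (hxyadj.reachable.trans ((hyv.trans hbv.symm).mono hle))
      · exact (((hav.trans hyv.symm).mono hle).trans
          (hxyadj.reachable.symm.trans ((hxu.trans hbu.symm).mono hle)))
    · intro h2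
      refine h2.mono (sup_le hFG ?_)
      have hxyG : G.Adj x y := hF'.1 (p.adj_of_mem_edges hxy)
      calc fromEdgeSet {s(x, y)} ≤ fromEdgeSet G.edgeSet :=
            fromEdgeSet_mono (by simp [hxyG])
        _ = G := fromEdgeSet_edgeSet G
end

section
/- Let T be a spanning tree of a weighted graph G = (V, E, w) with w(e) ∈ [1, U], and assign to each edge e the level ℓ(e) = the least i ≥ 0 with w(e) ≤ (1+ε)^i. If T minimizes the total level Σ_{e∈T} ℓ(e) among all spanning trees of G, then w(T) ≤ (1+ε) · w(T*) where T* is a minimum weight spanning tree of G. -/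
open SimpleGraph
open scoped Classical

/-- Along a path from `x` (where `P` holds) to `y` (where it fails), there is a crossing
edge `s(a,b)` with `P a`, `¬ P b`, and both path segments avoid that edge. -/
private lemma cross_lemma {V : Type*} {W : SimpleGraph V} (P : V → Prop) :
    ∀ {x y : V} (p : W.Walk x y), p.IsPath → P x → ¬ P y →
    ∃ a b, W.Adj a b ∧ P a ∧ ¬ P b ∧ s(a, b) ∈ p.edges ∧
      (W.deleteEdges {s(a, b)}).Reachable x a ∧ (W.deleteEdges {s(a, b)}).Reachable b y := by
  intro x y p
  induction p with
  | nil => intro _ hx hy; exact absurd hx hy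
  | @cons x c y h q ih =>
    intro hp hx hy
    rw [SimpleGraph.Walk.cons_isPath_iff] at hp
    by_cases hc : P c
    · obtain ⟨a, b, hab, ha, hb, hmem, r1, r2⟩ := ih hp.1 hc hy
      have hne : s(x, c) ≠ s(a, b) := by
        intro hEq
        exact hp.2 (SimpleGraph.Walk.fst_mem_support_of_mem_edges q (hEq ▸ hmem))
      have hadj : (W.deleteEdges {s(a, b)}).Adj x c := by
        rw [deleteEdges_adj]
        exact ⟨h, by simpa using hne⟩
      exact ⟨a, b, hab, ha, hb, by simp [hmem], hadj.reachable.trans r1, r2⟩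
    · refine ⟨x, c, h, hx, hc, by simp, Reachable.refl x, ?_⟩
      have hq : ∀ e ∈ q.edges, e ∉ ({s(x, c)} : Set (Sym2 V)) := by
        intro e he hmem
        rw [Set.mem_singleton_iff] at hmem
        subst hmem
        exact hp.2 (SimpleGraph.Walk.fst_mem_support_of_mem_edges q he)
      exact ⟨q.toDeleteEdges _ hq⟩

/-- After deleting a single edge `s(x,y)`, every vertex that had a walk to `z`
can still reach `z`, or reach `x` or `y`. -/
private lemma reach2 {V : Type*} {W : SimpleGraph V} {x y : V} :
    ∀ {v z : V}, W.Walk v z →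
      (W.deleteEdges {s(x, y)}).Reachable v z ∨ (W.deleteEdges {s(x, y)}).Reachable v x ∨
        (W.deleteEdges {s(x, y)}).Reachable v y := by
  intro v z p
  induction p with
  | nil => exact Or.inl (Reachable.refl _)
  | @cons a b _ h q ih =>
    by_cases he : s(a, b) = s(x, y)
    · rw [Sym2.eq_iff] at he
      rcases he with ⟨rfl, rfl⟩ | ⟨rfl, rfl⟩
      · exact Or.inr (Or.inl (Reachable.refl _))
      · exact Or.inr (Or.inr (Reachable.refl _))
    · have hadj : (W.deleteEdges {s(x, y)}).Adj a b := by
        rw [deleteEdges_adj]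
        exact ⟨h, by simpa using he⟩
      rcases ih with r | r | r
      · exact Or.inl (hadj.reachable.trans r)
      · exact Or.inr (Or.inl (hadj.reachable.trans r))
      · exact Or.inr (Or.inr (hadj.reachable.trans r))

/-- The spanning-tree exchange lemma: given spanning trees `T, T'` of `G` and
`f ∈ T \ T'`, there is `e ∈ T' \ T` such that both `T - f + e` and `T' - e + f`
are spanning trees of `G`. -/
private lemma exchange {V : Type*} [Fintype V] {G T T' : SimpleGraph V}
    (hTle : T ≤ G) (hTt : T.IsTree) (hT'le : T' ≤ G) (hT't : T'.IsTree)
    {f : Sym2 V} (hfT : f ∈ T.edgeFinset) (hfT' : f ∉ T'.edgeFinset) :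
    ∃ e, e ∈ T'.edgeFinset ∧ e ∉ T.edgeFinset ∧
      (∃ S : SimpleGraph V, S ≤ G ∧ S.IsTree ∧
        S.edgeSet = ↑(insert e (T.edgeFinset.erase f))) ∧
      (∃ S : SimpleGraph V, S ≤ G ∧ S.IsTree ∧
        S.edgeSet = ↑(insert f (T'.edgeFinset.erase e))) := by
  revert hfT hfT'
  induction f using Sym2.ind with
  | _ x y =>
  intro hfT hfT'
  rw [mem_edgeFinset, mem_edgeSet] at hfT
  -- `hfT : T.Adj x y`
  have hbr : ¬ (T.deleteEdges {s(x, y)}).Reachable x y :=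
    isBridge_iff.mp (isAcyclic_iff_forall_adj_isBridge.mp hTt.IsAcyclic hfT)
  set P : V → Prop := fun v => (T.deleteEdges {s(x, y)}).Reachable x v with hP
  have hPx : P x := Reachable.refl x
  have hPy : ¬ P y := hbr
  obtain ⟨p₀⟩ := hT't.isConnected.preconnected x y
  obtain ⟨a, b, hab, hPa, hPb, hmem, r1, r2⟩ :=
    cross_lemma P p₀.toPath.1 p₀.toPath.2 hPx hPy
  have heT' : s(a, b) ∈ T'.edgeSet := T'.mem_edgeSet.mpr hab
  have hfne : s(a, b) ≠ s(x, y) := by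
    intro hEq
    exact hfT' (mem_edgeFinset.mpr (hEq ▸ heT'))
  have heT : s(a, b) ∉ T.edgeSet := by
    intro hmem'
    have hadj : (T.deleteEdges {s(x, y)}).Adj a b := by
      rw [deleteEdges_adj]
      exact ⟨T.mem_edgeSet.mp hmem', by simpa using hfne⟩
    exact hPb (hPa.trans hadj.reachable)
  have hPb' : (T.deleteEdges {s(x, y)}).Reachable b y := by
    obtain ⟨q⟩ := hTt.isConnected.preconnected b x
    rcases reach2 (y := y) q with r | r | r
    · exact absurd r.symm hPb
    · exact absurd r.symm hPb
    · exact r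
  have hbr' : ¬ (T'.deleteEdges {s(a, b)}).Reachable a b :=
    isBridge_iff.mp (isAcyclic_iff_forall_adj_isBridge.mp hT't.IsAcyclic hab)
  -- First swapped tree : S1 = T - f + e
  set S1 : SimpleGraph V := fromEdgeSet ((T.edgeSet \ {s(x, y)}) ∪ {s(a, b)}) with hS1def
  have hS1E : S1.edgeSet = (T.edgeSet \ {s(x, y)}) ∪ {s(a, b)} := by
    rw [hS1def, edgeSet_fromEdgeSet]
    ext z
    simp only [Set.mem_diff, Set.mem_union, Set.mem_singleton_iff, Set.mem_setOf_eq]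
    constructor
    · exact fun hz => hz.1
    · intro hz
      refine ⟨hz, ?_⟩
      rcases hz with ⟨hz, _⟩ | rfl
      · exact T.not_isDiag_of_mem_edgeSet hz
      · exact T'.not_isDiag_of_mem_edgeSet heT'
  have hS1le : S1 ≤ G := by
    intro u v huv
    rw [hS1def, fromEdgeSet_adj] at huv
    rcases huv.1 with ⟨hz, _⟩ | hz
    · exact hTle ((T.mem_edgeSet).mp hz)
    · exact hT'le ((T'.mem_edgeSet).mp (hz ▸ heT'))
  have hle1 : T.deleteEdges {s(x, y)} ≤ S1 := by
    intro u v huv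
    rw [deleteEdges_adj] at huv
    rw [hS1def, fromEdgeSet_adj]
    exact ⟨Or.inl ⟨(T.mem_edgeSet).mpr huv.1, by simpa using huv.2⟩, huv.1.ne⟩
  have habS1 : S1.Adj a b := by
    rw [hS1def, fromEdgeSet_adj]
    exact ⟨Or.inr rfl, hab.ne⟩
  have hS1conn : S1.Connected := by
    have hra : ∀ v, S1.Reachable v a := by
      intro v
      obtain ⟨q⟩ := hTt.isConnected.preconnected v x
      rcases reach2 (y := y) q with r | r | r
      · exact (r.mono hle1).trans (hPa.mono hle1)
      · exact (r.mono hle1).trans (hPa.mono hle1)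
      · exact ((r.mono hle1).trans ((hPb'.symm).mono hle1)).trans habS1.symm.reachable
    rw [connected_iff]
    exact ⟨fun u v => (hra u).trans (hra v).symm, ⟨x⟩⟩
  have hS1ac : S1.IsAcyclic := by
    intro v c hc
    by_cases he : s(a, b) ∈ c.edges
    · have hre : (S1 \ fromEdgeSet {s(a, b)}).Reachable a b :=
        (adj_and_reachable_delete_edges_iff_exists_cycle.mpr ⟨v, c, hc, he⟩).2
      have hle : S1 \ fromEdgeSet {s(a, b)} ≤ T.deleteEdges {s(x, y)} := by
        intro u u' huv
        have huv' : S1.Adj u u' ∧ s(u, u') ∉ ({s(a, b)} : Set (Sym2 V)) :=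
          deleteEdges_adj.mp huv
        have hz : s(u, u') ∈ S1.edgeSet := (S1.mem_edgeSet).mpr huv'.1
        rw [hS1E] at hz
        rcases hz with ⟨hz1, hz2⟩ | hz
        · rw [deleteEdges_adj]
          exact ⟨(T.mem_edgeSet).mp hz1, by simpa using hz2⟩
        · exact absurd (by simpa using hz) huv'.2
      exact hPb (hPa.trans (hre.mono hle))
    · have hT_edges : ∀ e ∈ c.edges, e ∈ T.edgeSet := by
        intro e hec
        have hz := c.edges_subset_edgeSet hec
        rw [hS1E] at hz
        rcases hz with ⟨hz1, _⟩ | rfl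
        · exact hz1
        · exact absurd hec he
      exact hTt.IsAcyclic (c.transfer T hT_edges) (hc.transfer _)
  have hS1fin : S1.edgeSet = ↑(insert s(a, b) (T.edgeFinset.erase s(x, y))) := by
    rw [hS1E]
    ext z
    simp only [Set.mem_union, Set.mem_diff, Set.mem_singleton_iff, Finset.coe_insert,
      Set.mem_insert_iff, Finset.coe_erase, Set.mem_diff, Finset.mem_coe, Finset.mem_erase,
      mem_edgeFinset]
    tauto
  -- Second swapped tree : S2 = T' - e + f
  set S2 : SimpleGraph V := fromEdgeSet ((T'.edgeSet \ {s(a, b)}) ∪ {s(x, y)}) with hS2def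
  have hS2E : S2.edgeSet = (T'.edgeSet \ {s(a, b)}) ∪ {s(x, y)} := by
    rw [hS2def, edgeSet_fromEdgeSet]
    ext z
    simp only [Set.mem_diff, Set.mem_union, Set.mem_singleton_iff, Set.mem_setOf_eq]
    constructor
    · exact fun hz => hz.1
    · intro hz
      refine ⟨hz, ?_⟩
      rcases hz with ⟨hz, _⟩ | rfl
      · exact T'.not_isDiag_of_mem_edgeSet hz
      · exact T.not_isDiag_of_mem_edgeSet ((T.mem_edgeSet).mpr hfT)
  have hS2le : S2 ≤ G := by
    intro u v huv
    rw [hS2def, fromEdgeSet_adj] at huv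
    rcases huv.1 with ⟨hz, _⟩ | hz
    · exact hT'le ((T'.mem_edgeSet).mp hz)
    · exact hTle ((T.mem_edgeSet).mp (hz ▸ (T.mem_edgeSet).mpr hfT))
  have hle2 : T'.deleteEdges {s(a, b)} ≤ S2 := by
    intro u v huv
    rw [deleteEdges_adj] at huv
    rw [hS2def, fromEdgeSet_adj]
    exact ⟨Or.inl ⟨(T'.mem_edgeSet).mpr huv.1, by simpa using huv.2⟩, huv.1.ne⟩
  have hxyS2 : S2.Adj x y := by
    rw [hS2def, fromEdgeSet_adj]
    exact ⟨Or.inr rfl, hfT.ne⟩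
  have hS2conn : S2.Connected := by
    have hrx : ∀ v, S2.Reachable v x := by
      intro v
      obtain ⟨q⟩ := hT't.isConnected.preconnected v a
      rcases reach2 (y := b) q with r | r | r
      · exact (r.mono hle2).trans ((r1.symm).mono hle2)
      · exact (r.mono hle2).trans ((r1.symm).mono hle2)
      · exact ((r.mono hle2).trans (r2.mono hle2)).trans hxyS2.symm.reachable
    rw [connected_iff]
    exact ⟨fun u v => (hrx u).trans (hrx v).symm, ⟨x⟩⟩
  have hS2ac : S2.IsAcyclic := by
    intro v c hc
    by_cases he : s(x, y) ∈ c.edges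
    · have hre : (S2 \ fromEdgeSet {s(x, y)}).Reachable x y :=
        (adj_and_reachable_delete_edges_iff_exists_cycle.mpr ⟨v, c, hc, he⟩).2
      have hle : S2 \ fromEdgeSet {s(x, y)} ≤ T'.deleteEdges {s(a, b)} := by
        intro u u' huv
        have huv' : S2.Adj u u' ∧ s(u, u') ∉ ({s(x, y)} : Set (Sym2 V)) :=
          deleteEdges_adj.mp huv
        have hz : s(u, u') ∈ S2.edgeSet := (S2.mem_edgeSet).mpr huv'.1
        rw [hS2E] at hz
        rcases hz with ⟨hz1, hz2⟩ | hz
        · rw [deleteEdges_adj]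
          exact ⟨(T'.mem_edgeSet).mp hz1, by simpa using hz2⟩
        · exact absurd (by simpa using hz) huv'.2
      exact hbr' (r1.symm.trans ((hre.mono hle).trans r2.symm))
    · have hT'_edges : ∀ e ∈ c.edges, e ∈ T'.edgeSet := by
        intro e hec
        have hz := c.edges_subset_edgeSet hec
        rw [hS2E] at hz
        rcases hz with ⟨hz1, _⟩ | rfl
        · exact hz1
        · exact absurd hec he
      exact hT't.IsAcyclic (c.transfer T' hT'_edges) (hc.transfer _)
  have hS2fin : S2.edgeSet = ↑(insert s(x, y) (T'.edgeFinset.erase s(a, b))) := by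
    rw [hS2E]
    ext z
    simp only [Set.mem_union, Set.mem_diff, Set.mem_singleton_iff, Finset.coe_insert,
      Set.mem_insert_iff, Finset.coe_erase, Set.mem_diff, Finset.mem_coe, Finset.mem_erase,
      mem_edgeFinset]
    tauto
  exact ⟨s(a, b), mem_edgeFinset.mpr heT', fun hmem' => heT (mem_edgeFinset.mp hmem'),
    ⟨S1, hS1le, ⟨hS1conn, hS1ac⟩, hS1fin⟩, ⟨S2, hS2le, ⟨hS2conn, hS2ac⟩, hS2fin⟩⟩

set_option maxHeartbeats 1600000 in
/-- A spanning tree minimizing the total level `Σ ℓ(e)`, where `ℓ(e)` is the least `i`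
with `w(e) ≤ (1+ε)^i`, is a `(1+ε)`-approximate minimum spanning tree. -/
theorem stmt14 {V : Type*} [Fintype V] (G : SimpleGraph V) (hG : G.Connected)
    (w : Sym2 V → ℝ) (U ε : ℝ) (hε : 0 < ε)
    (hw : ∀ e ∈ G.edgeSet, 1 ≤ w e ∧ w e ≤ U)
    (ℓ : Sym2 V → ℕ)
    (hℓ : ∀ e ∈ G.edgeSet,
      w e ≤ (1 + ε) ^ (ℓ e) ∧ ∀ i : ℕ, w e ≤ (1 + ε) ^ i → ℓ e ≤ i)
    (T : SimpleGraph V) (hT : T ≤ G) (hTtree : T.IsTree)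
    (hmin : ∀ T' : SimpleGraph V, T' ≤ G → T'.IsTree →
      ∑ e ∈ T.edgeFinset, ℓ e ≤ ∑ e ∈ T'.edgeFinset, ℓ e)
    (Tstar : SimpleGraph V) (hTs : Tstar ≤ G) (hTstree : Tstar.IsTree)
    (hTsmin : ∀ T' : SimpleGraph V, T' ≤ G → T'.IsTree →
      ∑ e ∈ Tstar.edgeFinset, w e ≤ ∑ e ∈ T'.edgeFinset, w e) :
    ∑ e ∈ T.edgeFinset, w e ≤ (1 + ε) * ∑ e ∈ Tstar.edgeFinset, w e := by
  have hε1 : (1 : ℝ) ≤ 1 + ε := by linarith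
  -- Key induction: T minimizes ∑ (1+ε)^(ℓ e) over all spanning trees.
  have key : ∀ m : ℕ, ∀ T' : SimpleGraph V, T' ≤ G → T'.IsTree →
      (T'.edgeFinset \ T.edgeFinset).card = m →
      ∑ e ∈ T.edgeFinset, (1 + ε) ^ (ℓ e) ≤ ∑ e ∈ T'.edgeFinset, (1 + ε) ^ (ℓ e) := by
    intro m
    induction m using Nat.strong_induction_on with
    | _ m IH =>
    intro T' hT'le hT't hcard
    have hcards : T'.edgeFinset.card = T.edgeFinset.card := by
      have h1 := hTtree.card_edgeFinset
      have h2 := hT't.card_edgeFinset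
      omega
    by_cases h0 : T'.edgeFinset \ T.edgeFinset = ∅
    · have hsub : T'.edgeFinset ⊆ T.edgeFinset := Finset.sdiff_eq_empty_iff_subset.mp h0
      rw [Finset.eq_of_subset_of_card_le hsub hcards.ge]
    · have hne : (T.edgeFinset \ T'.edgeFinset).Nonempty := by
        rw [Finset.sdiff_nonempty]
        intro hsub
        have heq := Finset.eq_of_subset_of_card_le hsub hcards.le
        rw [heq, Finset.sdiff_self] at h0
        exact h0 rfl
      obtain ⟨f, hf⟩ := hne
      rw [Finset.mem_sdiff] at hf
      obtain ⟨e, heT', heT, ⟨S1, hS1le, hS1t, hS1E⟩, ⟨S2, hS2le, hS2t, hS2E⟩⟩ :=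
        exchange hT hTtree hT'le hT't hf.1 hf.2
      have hS1fin : S1.edgeFinset = insert e (T.edgeFinset.erase f) := by
        ext z
        rw [mem_edgeFinset, hS1E]
        simp only [Finset.coe_insert, Set.mem_insert_iff, Finset.coe_erase, Set.mem_diff,
          Finset.mem_coe, mem_edgeFinset, Finset.mem_insert, Finset.mem_erase,
          Set.mem_singleton_iff]
        tauto
      have hS2fin : S2.edgeFinset = insert f (T'.edgeFinset.erase e) := by
        ext z
        rw [mem_edgeFinset, hS2E]
        simp only [Finset.coe_insert, Set.mem_insert_iff, Finset.coe_erase, Set.mem_diff,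
          Finset.mem_coe, mem_edgeFinset, Finset.mem_insert, Finset.mem_erase,
          Set.mem_singleton_iff]
        tauto
      -- From minimality of T for ℓ : ℓ f ≤ ℓ e
      have hfe : ℓ f ≤ ℓ e := by
        have hsum1 := hmin S1 hS1le hS1t
        rw [hS1fin, Finset.sum_insert (by simp [heT])] at hsum1
        have hsplit := Finset.add_sum_erase T.edgeFinset ℓ hf.1
        omega
      -- Induction step via S2
      have hmemE : e ∈ T'.edgeFinset \ T.edgeFinset := Finset.mem_sdiff.mpr ⟨heT', heT⟩
      have hm0 : m ≠ 0 := by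
        intro h
        rw [h, Finset.card_eq_zero] at hcard
        rw [hcard] at hmemE
        exact absurd hmemE (Finset.notMem_empty e)
      have hsd : S2.edgeFinset \ T.edgeFinset = (T'.edgeFinset \ T.edgeFinset).erase e := by
        rw [hS2fin]
        ext z
        simp only [Finset.mem_sdiff, Finset.mem_erase, Finset.mem_insert]
        constructor
        · rintro ⟨rfl | ⟨hz1, hz2⟩, hz3⟩
          · exact absurd hf.1 hz3
          · exact ⟨hz1, hz2, hz3⟩
        · rintro ⟨hz1, hz2, hz3⟩
          exact ⟨Or.inr ⟨hz1, hz2⟩, hz3⟩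
      have h2 := IH (m - 1) (by omega) S2 hS2le hS2t
        (by rw [hsd, Finset.card_erase_of_mem hmemE, hcard])
      have hgfe : (1 + ε) ^ (ℓ f) ≤ (1 + ε) ^ (ℓ e) := pow_le_pow_right₀ hε1 hfe
      calc ∑ x ∈ T.edgeFinset, (1 + ε) ^ (ℓ x)
          ≤ ∑ x ∈ S2.edgeFinset, (1 + ε) ^ (ℓ x) := h2
        _ = (1 + ε) ^ (ℓ f) + ∑ x ∈ T'.edgeFinset.erase e, (1 + ε) ^ (ℓ x) := by
            rw [hS2fin, Finset.sum_insert (by simp [hf.2])]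
        _ ≤ (1 + ε) ^ (ℓ e) + ∑ x ∈ T'.edgeFinset.erase e, (1 + ε) ^ (ℓ x) :=
            add_le_add_left hgfe _
        _ = ∑ x ∈ T'.edgeFinset, (1 + ε) ^ (ℓ x) :=
            Finset.add_sum_erase _ (fun x => (1 + ε) ^ (ℓ x)) heT'
  have step1 : ∑ e ∈ T.edgeFinset, w e ≤ ∑ e ∈ T.edgeFinset, (1 + ε) ^ (ℓ e) := by
    refine Finset.sum_le_sum fun e he => ?_
    exact (hℓ e (edgeSet_mono hT (mem_edgeFinset.mp he))).1
  have step2 := key _ Tstar hTs hTstree rfl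
  have step3 : ∑ e ∈ Tstar.edgeFinset, (1 + ε) ^ (ℓ e)
      ≤ (1 + ε) * ∑ e ∈ Tstar.edgeFinset, w e := by
    rw [Finset.mul_sum]
    refine Finset.sum_le_sum fun e he => ?_
    have heG : e ∈ G.edgeSet := edgeSet_mono hTs (mem_edgeFinset.mp he)
    have h1 := (hw e heG).1
    by_cases h0 : ℓ e = 0
    · rw [h0, pow_zero]; nlinarith
    · obtain ⟨n, hn⟩ := Nat.exists_eq_succ_of_ne_zero h0
      have hlt : (1 + ε) ^ n < w e := by
        by_contra hcon
        push_neg at hcon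
        have := (hℓ e heG).2 n hcon
        omega
      rw [hn]
      calc (1 + ε) ^ (n + 1) = (1 + ε) * (1 + ε) ^ n := by ring
        _ ≤ (1 + ε) * w e := by nlinarith
  linarith
end

section
/- Let G be a graph whose vertex set is partitioned into parts X₁, …, X_η such that each G[X_j] is a φ-expander, and suppose from each part X_j a set P_j ⊆ X_j with vol_{G[X_j]}(P_j) ≤ vol_{G[X_j]}(X_j)/2 is pruned such that G[X_j \ P_j] is a φ'-expander for some φ' > 0. Let H contain, for each j: a spanning tree of each connected component of G[X_j \ P_j], all edges of G[X_j] incident to P_j, and all edges of G between distinct parts. Then H is a connectivity sparsifier of G. -/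
open SimpleGraph
open scoped Classical

/-- `vol G A = Σ_{a ∈ A} deg_G(a)` for a set `A`. -/
noncomputable def volS {V : Type*} [Fintype V] (G : SimpleGraph V) (A : Set V) : ℕ :=
  ∑ a ∈ Finset.univ.filter (· ∈ A), G.degree a

/-- `crossing G A = |E(A, V \ A)|`. -/
noncomputable def crossing {V : Type*} [Fintype V] (G : SimpleGraph V) (A : Finset V) : ℕ :=
  (G.edgeFinset.filter (fun e => ∃ u v : V, e = s(u, v) ∧ u ∈ A ∧ v ∉ A)).card

/-- `G` is a `φ`-expander. -/
def IsExpander {V : Type*} [Fintype V] (G : SimpleGraph V) (φ : ℝ) : Prop :=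
  ∀ A : Finset V, A.Nonempty →
    ((∑ a ∈ A, G.degree a : ℕ) : ℝ) ≤ ((∑ a : V, G.degree a : ℕ) : ℝ) / 2 →
    φ * ((∑ a ∈ A, G.degree a : ℕ) : ℝ) ≤ (crossing G A : ℝ)

/-- The restriction of `G` to a vertex set `S`, kept as a graph on the same vertex type. -/
def restrict {V : Type*} (G : SimpleGraph V) (S : Set V) : SimpleGraph V where
  Adj u v := G.Adj u v ∧ u ∈ S ∧ v ∈ S
  symm := ⟨by rintro u v ⟨h, hu, hv⟩; exact ⟨h.symm, hv, hu⟩⟩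
  loopless := ⟨by rintro v ⟨h, _⟩; exact G.loopless.irrefl v h⟩

/-- Prune sets `P j` from the `φ`-expander parts `X j` of a partition of `G` such that
each `G[X_j \ P_j]` is a `φ'`-expander. Then the graph `H` consisting of spanning trees
of the components of the pruned parts, all edges incident to the pruned sets, and all
inter-part edges, is a connectivity sparsifier of `G`. -/
theorem stmt19 {V ι : Type*} [Fintype V] (G : SimpleGraph V) (φ φ' : ℝ)
    (hφ : 0 < φ) (hφ' : 0 < φ')
    (p : V → ι) (P : ι → Set V) (hP : ∀ j, P j ⊆ {v : V | p v = j})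
    (hexp : ∀ j, IsExpander (restrict G {v : V | p v = j}) φ)
    (hvol : ∀ j, (volS (restrict G {v : V | p v = j}) (P j) : ℝ)
      ≤ (volS (restrict G {v : V | p v = j}) Set.univ : ℝ) / 2)
    (hexp' : ∀ j, IsExpander (restrict G ({v : V | p v = j} \ P j)) φ')
    (T : ι → SimpleGraph V)
    (hTle : ∀ j, T j ≤ restrict G ({v : V | p v = j} \ P j))
    (hTacyclic : ∀ j, (T j).IsAcyclic)
    (hTspan : ∀ j u v, (restrict G ({v : V | p v = j} \ P j)).Reachable u v →
      (T j).Reachable u v)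
    (H : SimpleGraph V)
    (hH : ∀ u v, H.Adj u v ↔
      ((∃ j, (T j).Adj u v) ∨
       (∃ j, G.Adj u v ∧ p u = j ∧ p v = j ∧ (u ∈ P j ∨ v ∈ P j)) ∨
       (G.Adj u v ∧ p u ≠ p v))) :
    ∀ u v : V, H.Reachable u v ↔ G.Reachable u v := by
  have hHG : H ≤ G := by
    intro u v huv
    rw [hH] at huv
    rcases huv with ⟨j, h⟩ | ⟨j, h, _⟩ | ⟨h, _⟩
    · exact ((hTle j) h).1
    · exact h
    · exact h
  have key : ∀ u v : V, G.Adj u v → H.Reachable u v := by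
    intro u v huv
    by_cases hp : p u = p v
    · by_cases hPu : u ∈ P (p u) ∨ v ∈ P (p u)
      · exact ((hH u v).2 (Or.inr (Or.inl ⟨p u, huv, rfl, hp.symm, hPu⟩))).reachable
      · push_neg at hPu
        have hr : (restrict G ({v : V | p v = p u} \ P (p u))).Adj u v :=
          ⟨huv, ⟨rfl, hPu.1⟩, ⟨hp.symm, hPu.2⟩⟩
        exact (hTspan (p u) u v hr.reachable).mono
          (fun a b hab => (hH a b).2 (Or.inl ⟨p u, hab⟩))
    · exact ((hH u v).2 (Or.inr (Or.inr ⟨huv, hp⟩))).reachable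
  intro u v
  constructor
  · exact fun h => h.mono hHG
  · intro h
    obtain ⟨w⟩ := h
    induction w with
    | nil => exact Reachable.refl _
    | cons h _ ih => exact (key _ _ h).trans ih
end
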